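/- Let R be a commutative Noetherian ring, x ∈ R, and A an Artinian R-module. If x ∉ p for every non-maximal attached prime p of A, then A/xA has finite length. -/

import Mathlib

/-!
Submodules of `A` satisfy the descending chain condition, so `A` is an irredundant finite sum of
sup-irreducible submodules `S`. A Fitting decomposition `S = ker aⁿ + aⁿ S` shows that every
`a ∈ R` acts on such an `S` surjectively or nilpotently, i.e. `S` is secondary. If `x` is
surjective on `S`, then `S ⊆ xA`. Otherwise, by irredundancy `S` maps onto the nonzero quotient
of `A` by the sum of the other summands, so `√(ann S)` is an attached prime of `A` containing `x`,
hence maximal; then `R ⧸ ann S` is an Artinian ring and `S` is finitely generated. Thus `A / xA`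
is finitely generated and Artinian, i.e. of finite length.
-/

open Opposite CategoryTheory CategoryTheory.Limits

noncomputable section

universe u

variable (R : Type u) [CommRing R]

/-- The directed system `n ↦ M ⧸ I^n M` (contravariant in `n`). -/
def modIdealPowersDiagram (I : Ideal R) (M : Type u) [AddCommGroup M] [Module R M] :
    ℕᵒᵖ ⥤ ModuleCat.{u} R where
  obj t := ModuleCat.of R (M ⧸ (I ^ (unop t) • ⊤ : Submodule R M))
  map w := ModuleCat.ofHom (Submodule.mapQ _ _ LinearMap.id
    (Submodule.smul_mono_left (Ideal.pow_le_pow_right w.unop.down.down)))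
  map_id t := by
    ext : 1
    exact Submodule.mapQ_id _
  map_comp f g := by
    ext : 1
    ext x
    rfl

/-- `H^j_I(M,N) = colim_n Ext^j_R(M/I^nM, N)`, the generalized local cohomology module. -/
def genLocalCohomology (I : Ideal R) (M N : Type u) [AddCommGroup M] [Module R M]
    [AddCommGroup N] [Module R N] (j : ℕ) : ModuleCat.{u} R :=
  colimit ((modIdealPowersDiagram R I M).op ⋙ Ext R (ModuleCat.{u} R) j ⋙
    (evaluation (ModuleCat.{u} R) (ModuleCat.{u} R)).obj (ModuleCat.of R N))

/-- `Ext^j_R(A, B)` as an `R`-module. -/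
def extModule (j : ℕ) (A B : Type u) [AddCommGroup A] [Module R A]
    [AddCommGroup B] [Module R B] : ModuleCat.{u} R :=
  ((Ext R (ModuleCat.{u} R) j).obj (op (ModuleCat.of R A))).obj (ModuleCat.of R B)

/-- `K` is `I`-cofinite: `Supp K ⊆ V(I)` and every `Ext^j_R(R/I, K)` is finitely generated. -/
def IsCofinite (I : Ideal R) (K : Type u) [AddCommGroup K] [Module R K] : Prop :=
  Module.support R K ⊆ PrimeSpectrum.zeroLocus (I : Set R) ∧
    ∀ j : ℕ, Module.Finite R (extModule R j (R ⧸ I) K)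

/-- The `I`-torsion submodule `Γ_I(N)`. -/
def gammaTorsion (I : Ideal R) (N : Type u) [AddCommGroup N] [Module R N] : Submodule R N :=
  ⨆ k : ℕ, Submodule.torsionBySet R N ((I ^ k : Ideal R) : Set R)

/-- `I_M := ann_R(M/IM)`. -/
def idealAnnQuot (I : Ideal R) (M : Type u) [AddCommGroup M] [Module R M] : Ideal R :=
  Module.annihilator R (M ⧸ (I • ⊤ : Submodule R M))

/-- A minimax module: a f.g. submodule with Artinian quotient. -/
def IsMinimax (K : Type u) [AddCommGroup K] [Module R K] : Prop :=
  ∃ T : Submodule R K, Module.Finite R T ∧ IsArtinian R (K ⧸ T)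

/-- A nontrivial module is `p`-secondary if every `a : R` acts surjectively or nilpotently
and `p = √(ann S)`. -/
def IsSecondary (p : Ideal R) (S : Type u) [AddCommGroup S] [Module R S] : Prop :=
  Nontrivial S ∧ (∀ a : R, Function.Surjective (fun s : S => a • s) ∨
    ∃ n : ℕ, ∀ s : S, a ^ n • s = 0) ∧ p = (Module.annihilator R S).radical

/-- The attached primes of `A`: primes `p` such that `A` has a `p`-secondary quotient. -/
def attachedPrimes (A : Type u) [AddCommGroup A] [Module R A] : Set (Ideal R) :=
  { p | ∃ Q : Submodule R A, IsSecondary R p (A ⧸ Q) }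

section

variable {α : Type*} [Lattice α] [OrderBot α] [WellFoundedLT α] [DecidableEq α]

theorem exists_irredundant_supIrred_decomposition (a : α) :
    ∃ s : Finset α, s.sup id = a ∧ (∀ ⦃b⦄, b ∈ s → SupIrred b) ∧
      ∀ ⦃b⦄, b ∈ s → (s.erase b).sup id ≠ a := by
  obtain ⟨s, ⟨hsup, hirr⟩, hmin⟩ := (measure Finset.card).wf.has_min
    {s : Finset α | s.sup id = a ∧ ∀ ⦃b⦄, b ∈ s → SupIrred b} (exists_supIrred_decomposition a)
  refine ⟨s, hsup, hirr, fun b hb hsup' => hmin _ ⟨hsup', fun c hc => hirr (s.mem_of_mem_erase hc)⟩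
    (Finset.card_erase_lt_of_mem hb)⟩

end

variable {R}

namespace IsSecondary

variable {p : Ideal R} {S B : Type u} [AddCommGroup S] [Module R S] [AddCommGroup B] [Module R B]

theorem mem_iff_not_surjective (h : IsSecondary R p S) (a : R) :
    a ∈ p ↔ ¬ Function.Surjective (fun s : S => a • s) := by
  obtain ⟨hnt, hdich, rfl⟩ := h
  rw [Ideal.mem_radical_iff]
  constructor
  · rintro ⟨n, hn⟩ hsurj
    have hzero : ∀ s : S, s = 0 := fun s => by
      obtain ⟨t, rfl⟩ := (smul_iterate (α := S) a n ▸ hsurj.iterate n) s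
      exact Module.mem_annihilator.mp hn t
    exact not_subsingleton S ⟨fun s t => (hzero s).trans (hzero t).symm⟩
  · intro hsurj
    obtain ⟨n, hn⟩ := (hdich a).resolve_left hsurj
    exact ⟨n, Module.mem_annihilator.mpr hn⟩

theorem of_surjective (h : IsSecondary R p S) [Nontrivial B] (f : S →ₗ[R] B)
    (hf : Function.Surjective f) : IsSecondary R p B := by
  have surj_of_surj (a : R) (ha : Function.Surjective (fun s : S => a • s)) :
      Function.Surjective (fun b : B => a • b) := fun b => by
    obtain ⟨s, rfl⟩ := hf b
    obtain ⟨t, rfl⟩ := ha s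
    exact ⟨f t, (f.map_smul a t).symm⟩
  have hdich (a : R) : Function.Surjective (fun b : B => a • b) ∨
      ∃ n : ℕ, ∀ b : B, a ^ n • b = 0 := by
    refine (h.2.1 a).imp (surj_of_surj a) fun ⟨n, hn⟩ => ⟨n, fun b => ?_⟩
    obtain ⟨s, rfl⟩ := hf b
    rw [← f.map_smul, hn, f.map_zero]
  have hB : IsSecondary R (Module.annihilator R B).radical B := ⟨inferInstance, hdich, rfl⟩
  refine ⟨inferInstance, hdich, le_antisymm ?_ fun a ha => ?_⟩
  · rw [h.2.2]
    exact Ideal.radical_mono (f.annihilator_le_of_surjective hf)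
  · exact (h.mem_iff_not_surjective a).2 fun hs => (hB.mem_iff_not_surjective a).1 ha
      (surj_of_surj a hs)

end IsSecondary

variable {A : Type u} [AddCommGroup A] [Module R A]

theorem SupIrred.isSecondary [IsArtinian R A] {N : Submodule R A} (hN : SupIrred N) :
    IsSecondary R (Module.annihilator R N).radical N := by
  refine ⟨Submodule.nontrivial_iff_ne_bot.mpr hN.ne_bot, fun a => ?_, rfl⟩
  set f : Module.End R N := LinearMap.lsmul R N a
  have hpow (n : ℕ) (s : N) : (f ^ n) s = a ^ n • s := by
    rw [Module.End.pow_apply]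
    exact congrFun (smul_iterate a n) s
  obtain ⟨n, hn⟩ := Filter.eventually_atTop.mp f.eventually_codisjoint_ker_pow_range_pow
  have hsup := congrArg (Submodule.map N.subtype) (codisjoint_iff.mp (hn (n + 1) n.le_succ))
  rw [Submodule.map_sup, Submodule.map_subtype_top] at hsup
  have eq_top {P : Submodule R N} (hP : P.map N.subtype = N) : P = ⊤ :=
    Submodule.map_injective_of_injective N.injective_subtype
      (hP.trans (Submodule.map_subtype_top N).symm)
  rcases hN.2 hsup with hker | hrange
  · right
    refine ⟨n + 1, fun s => ?_⟩
    rw [← hpow, ← LinearMap.mem_ker, eq_top hker]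
    exact Submodule.mem_top
  · left
    have hrange_le : LinearMap.range (f ^ (n + 1)) ≤ LinearMap.range f := by
      rw [pow_succ', Module.End.mul_eq_comp]
      exact LinearMap.range_comp_le_range _ _
    exact LinearMap.range_eq_top.mp (top_unique ((eq_top hrange).ge.trans hrange_le))

theorem mem_attachedPrimes_of_sup_eq_top {p : Ideal R} {N T : Submodule R A}
    (hN : IsSecondary R p N) (hNT : N ⊔ T = ⊤) (hT : T ≠ ⊤) : p ∈ attachedPrimes R A := by
  have : Nontrivial (A ⧸ T) := Submodule.Quotient.nontrivial_iff.mpr hT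
  refine ⟨T, hN.of_surjective (T.mkQ ∘ₗ N.subtype) ?_⟩
  rw [← LinearMap.range_eq_top, LinearMap.range_comp, Submodule.range_subtype,
    Submodule.map_mkQ_eq_top, sup_comm, hNT]

theorem isNoetherian_of_isMaximal_radical_annihilator [IsNoetherianRing R] [IsArtinian R A]
    (h : (Module.annihilator R A).radical.IsMaximal) : IsNoetherian R A := by
  set I := Module.annihilator R A
  let := Module.quotientAnnihilator (R := R) (M := A)
  have : Ring.KrullDimLE 0 (R ⧸ I) := Ring.krullDimLE_zero_iff.mpr fun J hJ =>
    Ideal.isMaximal_of_isIntegral_of_isMaximal_comap _ <| by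
      have hJ' := hJ.comap (algebraMap R (R ⧸ I))
      have hIJ : I ≤ J.comap (algebraMap R (R ⧸ I)) := by
        simpa using Ideal.ker_le_comap (Ideal.Quotient.mk I) (K := J)
      rwa [← h.eq_of_le hJ'.ne_top (hJ'.radical_le_iff.mpr hIJ)]
  have : IsArtinianRing (R ⧸ I) := IsNoetherianRing.isArtinianRing_of_krullDimLE_zero
  have : IsArtinian (R ⧸ I) A := isArtinian_of_tower R ‹_›
  have : IsNoetherian (R ⧸ I) A := IsSemiprimaryRing.isNoetherian_iff_isArtinian.mpr ‹_›
  exact ((Module.isTorsionBySet_annihilator R A).semilinearMap.isNoetherian_iff_of_bijective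
    Function.bijective_id).mpr ‹_›

theorem Module.Finite.quotient_of_le_or_fg {P : Submodule R A} (𝓢 : Finset (Submodule R A))
    (hsup : 𝓢.sup id = ⊤) (h : ∀ S ∈ 𝓢, S ≤ P ∨ S.FG) : Module.Finite R (A ⧸ P) := by
  classical
  set F := (𝓢.filter Submodule.FG).sup id
  have hF : F.FG := Submodule.fg_finset_sup _ _ fun S hS => (Finset.mem_filter.mp hS).2
  have hPF : P ⊔ F = ⊤ := by
    refine top_unique (hsup ▸ Finset.sup_le fun S hS => ?_)
    rcases h S hS with hP | hfg
    · exact le_sup_of_le_left hP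
    · exact le_sup_of_le_right (Finset.le_sup (f := id) (Finset.mem_filter.mpr ⟨hS, hfg⟩))
  rw [Module.finite_def, ← (Submodule.map_mkQ_eq_top P F).mpr hPF]
  exact hF.map _

theorem le_range_lsmul_or_fg [IsNoetherianRing R] [IsArtinian R A] {x : R}
    (hx : ∀ p ∈ attachedPrimes R A, ¬ p.IsMaximal → x ∉ p) {S T : Submodule R A}
    (hS : IsSecondary R (Module.annihilator R S).radical S) (hST : S ⊔ T = ⊤) (hT : T ≠ ⊤) :
    S ≤ LinearMap.range (LinearMap.lsmul R A x) ∨ S.FG := by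
  by_cases hxS : Function.Surjective (fun s : S => x • s)
  · left
    intro s hs
    obtain ⟨t, ht⟩ := hxS ⟨s, hs⟩
    exact ⟨t, congrArg Subtype.val ht⟩
  · right
    have hmax : (Module.annihilator R S).radical.IsMaximal := by
      by_contra hmax
      exact hx _ (mem_attachedPrimes_of_sup_eq_top hS hST hT) hmax
        ((hS.mem_iff_not_surjective x).mpr hxS)
    have := isNoetherian_of_isMaximal_radical_annihilator hmax
    exact Module.Finite.iff_fg.mp inferInstance

/-- If `x` avoids every non-maximal attached prime of the Artinian module `A`,
then `A/xA` has finite length. -/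
theorem stmt3 [IsNoetherianRing R] (x : R) (A : Type u) [AddCommGroup A] [Module R A]
    [IsArtinian R A]
    (hx : ∀ p ∈ attachedPrimes R A, ¬ p.IsMaximal → x ∉ p) :
    IsFiniteLength R (A ⧸ LinearMap.range (LinearMap.lsmul R A x)) := by
  classical
  obtain ⟨𝓢, hsup, hirred, hirredundant⟩ :=
    exists_irredundant_supIrred_decomposition (⊤ : Submodule R A)
  have : Module.Finite R (A ⧸ LinearMap.range (LinearMap.lsmul R A x)) := by
    refine Module.Finite.quotient_of_le_or_fg 𝓢 hsup fun S hS => ?_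
    have hST : S ⊔ (𝓢.erase S).sup id = ⊤ := by
      rw [← Finset.insert_erase hS, Finset.sup_insert] at hsup
      exact hsup
    exact le_range_lsmul_or_fg hx (hirred hS).isSecondary hST (hirredundant hS)
  exact isFiniteLength_iff_isNoetherian_isArtinian.mpr ⟨inferInstance, inferInstance⟩

end
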